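/- Let X be a tree-structured Markov chain on disjoint layers S_1,...,S_L where each transition from a state o_l in S_l to a child in its high-probability set C_{o_l} has probability Θ(1/M), and any other nonzero transition has probability o(1/M²) but at least some constant c > 0. Then for fixed q ∈ S_1 and a ∈ S_L, if there exist O(1) easy paths (using only high-probability edges) and at most Θ(M) hard paths (each containing at least one low-probability edge with probability at most Θ(1/M^{L-2})) from q to a, the total probability that the chain started at q reaches a is Θ(M^{-(L-1)}). -/
import Mathlib


/-- In a tree-structured Markov chain, with O(1) easy paths from `q` to `a`
(each a product of `L-1` edges of probability Θ(1/M)) and at most Θ(M) hard paths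
(each containing a sparse edge of probability at most Θ(1/M^(L-2)), other edges at most Θ(1/M)),
the total probability of reaching `a` from `q` (the sum of all path probabilities) is
Θ(M^{-(L-1)}). -/
theorem tmc_reach_probability_theta (L : ℕ) (hL : 4 ≤ L)
    (C₀ Ch c₁ c₂ c₃ : ℝ) (hC₀ : 0 < C₀) (hCh : 0 < Ch)
    (hc₁ : 0 < c₁) (hc₂ : c₁ ≤ c₂) (hc₃ : 0 < c₃) :
    ∃ K₁ K₂ : ℝ, 0 < K₁ ∧ 0 < K₂ ∧
      ∀ M : ℝ, 2 ≤ M →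
      ∀ (ι : Type) [DecidableEq ι] (Easy Hard : Finset ι) (w : ι → ℝ),
        -- `Easy ∪ Hard` is the set of all paths from q to a, `w` the path probability
        Disjoint Easy Hard →
        (∀ p, 0 ≤ w p) →
        -- O(1) easy paths, at least one
        1 ≤ Easy.card → (Easy.card : ℝ) ≤ C₀ →
        -- each easy path uses L-1 high-probability edges of mass Θ(1/M)
        (∀ p ∈ Easy, c₁ * M ^ (-(L : ℝ) + 1) ≤ w p ∧ w p ≤ c₂ * M ^ (-(L : ℝ) + 1)) →
        -- at most Θ(M) hard paths
        (Hard.card : ℝ) ≤ Ch * M →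
        -- each hard path has a sparse edge of probability ≤ Θ(1/M^(L-2)),
        -- the other L-2 edges having probability at most c₂/M
        (∀ p ∈ Hard, w p ≤ c₃ * M ^ (-(L : ℝ) + 2) * (c₂ / M) ^ (L - 2)) →
        K₁ * M ^ (-(L : ℝ) + 1) ≤ ∑ p ∈ Easy ∪ Hard, w p ∧
          ∑ p ∈ Easy ∪ Hard, w p ≤ K₂ * M ^ (-(L : ℝ) + 1) := by
  have hc2pos : (0:ℝ) < c₂ := lt_of_lt_of_le hc₁ hc₂
  refine ⟨c₁, C₀ * c₂ + Ch * c₃ * c₂ ^ (L - 2), hc₁, by positivity, ?_⟩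
  intro M hM ι _ Easy Hard w hdisj hw hE1 hEC hEasy hHcard hHard
  have hM0 : (0:ℝ) < M := lt_of_lt_of_le two_pos hM
  have hM1 : (1:ℝ) ≤ M := le_trans one_le_two hM
  have hpow : (0:ℝ) < M ^ (-(L : ℝ) + 1) := Real.rpow_pos_of_pos hM0 _
  rw [Finset.sum_union hdisj]
  constructor
  · have h1 : c₁ * M ^ (-(L : ℝ) + 1) ≤ ∑ p ∈ Easy, w p := by
      calc c₁ * M ^ (-(L : ℝ) + 1)
          ≤ (Easy.card : ℝ) * (c₁ * M ^ (-(L : ℝ) + 1)) := by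
            nlinarith [mul_pos hc₁ hpow, (by exact_mod_cast hE1 : (1:ℝ) ≤ (Easy.card : ℝ))]
        _ ≤ ∑ p ∈ Easy, w p := by
            rw [← nsmul_eq_mul, ← Finset.sum_const]
            exact Finset.sum_le_sum fun p hp => (hEasy p hp).1
    have h2 : (0:ℝ) ≤ ∑ p ∈ Hard, w p := Finset.sum_nonneg fun p _ => hw p
    linarith
  · have hE : ∑ p ∈ Easy, w p ≤ C₀ * (c₂ * M ^ (-(L : ℝ) + 1)) := by
      calc ∑ p ∈ Easy, w p ≤ (Easy.card : ℝ) * (c₂ * M ^ (-(L : ℝ) + 1)) := by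
            rw [← nsmul_eq_mul, ← Finset.sum_const]
            exact Finset.sum_le_sum fun p hp => (hEasy p hp).2
        _ ≤ C₀ * (c₂ * M ^ (-(L : ℝ) + 1)) := by
            have := mul_pos hc2pos hpow
            nlinarith
    have hkey : c₃ * M ^ (-(L : ℝ) + 2) * (c₂ / M) ^ (L - 2)
        ≤ c₃ * c₂ ^ (L - 2) * M ^ (-(L : ℝ)) := by
      have hdiv : (c₂ / M) ^ (L - 2) = c₂ ^ (L - 2) * (M ^ (L - 2))⁻¹ := by
        rw [div_pow, div_eq_mul_inv]
      rw [hdiv]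
      have hMn : (M:ℝ) ^ (L - 2) = M ^ ((L:ℝ) - 2) := by
        rw [← Real.rpow_natCast M (L - 2)]
        congr 1
        have : (2:ℕ) ≤ L := le_trans (by norm_num) hL
        push_cast [Nat.cast_sub this]
        ring
      rw [hMn, ← Real.rpow_neg hM0.le]
      have hcomb : M ^ (-(L : ℝ) + 2) * M ^ (-((L:ℝ) - 2)) = M ^ (-(L:ℝ) + 2 + -((L:ℝ) - 2)) :=
        (Real.rpow_add hM0 _ _).symm
      have hle : M ^ (-(L:ℝ) + 2 + -((L:ℝ) - 2)) ≤ M ^ (-(L:ℝ)) := by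
        apply Real.rpow_le_rpow_of_exponent_le hM1
        have : (4:ℝ) ≤ (L:ℝ) := by exact_mod_cast hL
        linarith
      calc c₃ * M ^ (-(L : ℝ) + 2) * (c₂ ^ (L - 2) * M ^ (-((L:ℝ) - 2)))
          = c₃ * c₂ ^ (L - 2) * (M ^ (-(L : ℝ) + 2) * M ^ (-((L:ℝ) - 2))) := by ring
        _ = c₃ * c₂ ^ (L - 2) * M ^ (-(L:ℝ) + 2 + -((L:ℝ) - 2)) := by rw [hcomb]
        _ ≤ c₃ * c₂ ^ (L - 2) * M ^ (-(L:ℝ)) := by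
            apply mul_le_mul_of_nonneg_left hle
            positivity
    have hH : ∑ p ∈ Hard, w p ≤ Ch * c₃ * c₂ ^ (L - 2) * M ^ (-(L : ℝ) + 1) := by
      calc ∑ p ∈ Hard, w p
          ≤ (Hard.card : ℝ) * (c₃ * c₂ ^ (L - 2) * M ^ (-(L : ℝ))) := by
            rw [← nsmul_eq_mul, ← Finset.sum_const]
            exact Finset.sum_le_sum fun p hp => le_trans (hHard p hp) hkey
        _ ≤ (Ch * M) * (c₃ * c₂ ^ (L - 2) * M ^ (-(L : ℝ))) := by
            apply mul_le_mul_of_nonneg_right hHcard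
            positivity
        _ = Ch * c₃ * c₂ ^ (L - 2) * (M ^ ((1:ℝ)) * M ^ (-(L : ℝ))) := by
            rw [Real.rpow_one]; ring
        _ = Ch * c₃ * c₂ ^ (L - 2) * M ^ (-(L : ℝ) + 1) := by
            rw [← Real.rpow_add hM0]; ring_nf
    linarith [hE, hH]
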